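/- The harmonic catenoid mapping f_C = h_C + conj∘g_C, where h_C(z) = (1/4)·log((1+z)/(1−z)) + (1/2)·z/(1−z²) and g_C(z) = (1/4)·log((1+z)/(1−z)) − (1/2)·z/(1−z²), is injective on 𝔻 and f_C(𝔻) is convex in the direction of the imaginary axis. -/

import Mathlib

/-!
With `ζ = artanh z = ½ log ((1 + z) / (1 - z))`, which maps `𝔻` bijectively onto the strip
`|Im ζ| < π / 4`, one has `h_C + g_C = ζ` and `h_C - g_C = z / (1 - z²) = ½ sinh 2ζ`. Hence
`f_C = Re (h_C + g_C) + i Im (h_C - g_C) = x + (i / 2) cosh 2x · sin 2y` for `ζ = x + i y`.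
For fixed `x`, `y ↦ sin 2y` is a bijection of `(-π/4, π/4)` onto `(-1, 1)`, so `f_C` maps `𝔻`
bijectively onto `{u + i v : |v| < ½ cosh 2u}`, whose vertical sections are intervals.
-/

open Complex Set

noncomputable section

/-- The open unit disk in the complex plane. -/
def 𝔻 : Set ℂ := {z : ℂ | ‖z‖ < 1}

/-- A set `Ω ⊆ ℂ` is convex in the direction of the imaginary axis if for every `a ∈ ℂ` the set
`{t ∈ ℝ : a + t·i ∈ Ω}` is an interval (order-connected). -/
def ConvexImDir (Ω : Set ℂ) : Prop :=
  ∀ a : ℂ, ({t : ℝ | a + (t : ℂ) * Complex.I ∈ Ω}).OrdConnected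

/-- Analytic part `h_D` of the harmonic Scherk doubly-periodic mapping. -/
def hD : ℂ → ℂ := fun z =>
  (1 / 4) * Complex.log ((1 + z) / (1 - z)) -
    (Complex.I / 4) * Complex.log ((1 + Complex.I * z) / (1 - Complex.I * z))

/-- Co-analytic part `g_D` of the harmonic Scherk doubly-periodic mapping. -/
def gD : ℂ → ℂ := fun z =>
  -((1 / 4) * Complex.log ((1 + z) / (1 - z))) -
    (Complex.I / 4) * Complex.log ((1 + Complex.I * z) / (1 - Complex.I * z))

/-- Analytic part `h_C` of the harmonic catenoid mapping. -/
def hC : ℂ → ℂ := fun z =>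
  (1 / 4) * Complex.log ((1 + z) / (1 - z)) + (1 / 2) * (z / (1 - z ^ 2))

/-- Co-analytic part `g_C` of the harmonic catenoid mapping. -/
def gC : ℂ → ℂ := fun z =>
  (1 / 4) * Complex.log ((1 + z) / (1 - z)) - (1 / 2) * (z / (1 - z ^ 2))

/-- The harmonic catenoid mapping `f_C = h_C + conj ∘ g_C`. -/
def fC : ℂ → ℂ := fun z => hC z + (starRingEnd ℂ) (gC z)

def quarterPiStrip : Set ℂ := {ζ : ℂ | |ζ.im| < Real.pi / 4}

lemma mem_quarterPiStrip_iff {ζ : ℂ} :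
    ζ ∈ quarterPiStrip ↔ 2 * ζ.im ∈ Ioo (-(Real.pi / 2)) (Real.pi / 2) := by
  change |ζ.im| < Real.pi / 4 ↔ _
  rw [abs_lt, mem_Ioo]
  constructor <;> rintro ⟨h₁, h₂⟩ <;> constructor <;> linarith

namespace Complex

def artanh (z : ℂ) : ℂ := log ((1 + z) / (1 - z)) / 2

section

variable {z : ℂ}

lemma one_add_ne_zero_of_norm_lt_one (hz : ‖z‖ < 1) : 1 + z ≠ 0 :=
  slitPlane_ne_zero (mem_slitPlane_of_norm_lt_one hz)

lemma one_sub_ne_zero_of_norm_lt_one (hz : ‖z‖ < 1) : 1 - z ≠ 0 := by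
  simpa [sub_eq_add_neg] using one_add_ne_zero_of_norm_lt_one (z := -z) (by simpa using hz)

lemma re_one_add_div_one_sub_pos (hz : ‖z‖ < 1) : 0 < ((1 + z) / (1 - z)).re := by
  have hnum : (1 + z).re * (1 - z).re + (1 + z).im * (1 - z).im = 1 - ‖z‖ ^ 2 := by
    rw [Complex.sq_norm, normSq_apply]
    simp only [add_re, sub_re, add_im, sub_im, one_re, one_im]
    ring
  rw [div_re, ← add_div, hnum]
  exact div_pos (by nlinarith [norm_nonneg z])
    (normSq_pos.2 (one_sub_ne_zero_of_norm_lt_one hz))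

lemma exp_two_mul_artanh (hz : ‖z‖ < 1) : exp (2 * artanh z) = (1 + z) / (1 - z) := by
  rw [artanh, mul_div_cancel₀ _ two_ne_zero,
    exp_log (div_ne_zero (one_add_ne_zero_of_norm_lt_one hz) (one_sub_ne_zero_of_norm_lt_one hz))]

lemma sinh_two_mul_artanh (hz : ‖z‖ < 1) : sinh (2 * artanh z) = 2 * (z / (1 - z ^ 2)) := by
  have h₁ := one_add_ne_zero_of_norm_lt_one hz
  have h₂ := one_sub_ne_zero_of_norm_lt_one hz
  have h₃ : 1 - z ^ 2 ≠ 0 := by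
    rw [show 1 - z ^ 2 = (1 - z) * (1 + z) by ring]
    exact mul_ne_zero h₂ h₁
  rw [sinh, exp_neg, exp_two_mul_artanh hz, inv_div]
  field_simp
  ring

lemma abs_artanh_im_lt (hz : ‖z‖ < 1) : |(artanh z).im| < Real.pi / 4 := by
  have harg : |arg ((1 + z) / (1 - z))| < Real.pi / 2 :=
    abs_arg_lt_pi_div_two_iff.2 (Or.inl (re_one_add_div_one_sub_pos hz))
  rw [artanh, div_ofNat_im, log_im, abs_div, abs_two]
  linarith

end

lemma sinh_im (u : ℂ) : (sinh u).im = Real.cosh u.re * Real.sin u.im := by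
  conv_lhs => rw [← re_add_im u]
  rw [sinh_add, sinh_mul_I, cosh_mul_I, ← ofReal_sinh, ← ofReal_cosh, ← ofReal_sin, ← ofReal_cos]
  simp only [add_im, mul_im, mul_re, ofReal_re, ofReal_im, I_re, I_im]
  ring

lemma add_conj_eq_mk (h g : ℂ) : h + starRingEnd ℂ g = ⟨(h + g).re, (h - g).im⟩ := by
  apply Complex.ext <;> simp [sub_eq_add_neg]

lemma norm_sub_one_lt_norm_add_one {w : ℂ} (hw : 0 < w.re) : ‖w - 1‖ < ‖w + 1‖ := by
  rw [← sq_lt_sq₀ (norm_nonneg _) (norm_nonneg _), Complex.sq_norm, Complex.sq_norm,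
    normSq_apply, normSq_apply]
  simp only [sub_re, sub_im, add_re, add_im, one_re, one_im]
  nlinarith

lemma injOn_artanh : InjOn artanh 𝔻 := by
  intro z₁ h₁ z₂ h₂ h
  have he := exp_two_mul_artanh h₁
  rw [h, exp_two_mul_artanh h₂, div_eq_div_iff (one_sub_ne_zero_of_norm_lt_one h₂)
    (one_sub_ne_zero_of_norm_lt_one h₁)] at he
  linear_combination -he / 2

lemma surjOn_artanh : SurjOn artanh 𝔻 quarterPiStrip := by
  intro ζ hζ
  rw [mem_quarterPiStrip_iff] at hζ
  set e := exp (2 * ζ)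
  have he : 0 < e.re := by
    rw [exp_re]
    exact mul_pos (Real.exp_pos _) (Real.cos_pos_of_mem_Ioo (by simpa using hζ))
  have he₁ : e + 1 ≠ 0 := by
    intro h
    have := congrArg re h
    simp only [add_re, one_re, zero_re] at this
    linarith
  refine ⟨(e - 1) / (e + 1), ?_, ?_⟩
  · show ‖_‖ < 1
    rw [norm_div, div_lt_one (norm_pos_iff.2 he₁)]
    exact norm_sub_one_lt_norm_add_one he
  · have hmob : (1 + (e - 1) / (e + 1)) / (1 - (e - 1) / (e + 1)) = e := by
      field_simp
      ring
    have him : (2 * ζ).im ∈ Ioc (-Real.pi) Real.pi := by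
      simp only [mul_im, re_ofNat, im_ofNat, zero_mul, add_zero]
      constructor <;> linarith [hζ.1, hζ.2, Real.pi_pos]
    rw [artanh, hmob, log_exp him.1 him.2]
    ring

lemma bijOn_artanh : BijOn artanh 𝔻 quarterPiStrip :=
  ⟨fun _ hz ↦ abs_artanh_im_lt hz, injOn_artanh, surjOn_artanh⟩

end Complex

def catenoidStripMap (ζ : ℂ) : ℂ := ⟨ζ.re, Real.cosh (2 * ζ.re) * Real.sin (2 * ζ.im) / 2⟩

@[simp]
lemma catenoidStripMap_re (ζ : ℂ) : (catenoidStripMap ζ).re = ζ.re := rfl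

@[simp]
lemma catenoidStripMap_im (ζ : ℂ) :
    (catenoidStripMap ζ).im = Real.cosh (2 * ζ.re) * Real.sin (2 * ζ.im) / 2 := rfl

def catenoidImage : Set ℂ := {w : ℂ | |w.im| < Real.cosh (2 * w.re) / 2}

lemma mem_catenoidImage {w : ℂ} : w ∈ catenoidImage ↔ |w.im| < Real.cosh (2 * w.re) / 2 :=
  Iff.rfl

lemma fC_eq_catenoidStripMap_artanh {z : ℂ} (hz : ‖z‖ < 1) :
    fC z = catenoidStripMap (Complex.artanh z) := by
  have hsum : hC z + gC z = Complex.artanh z := by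
    simp only [hC, gC, Complex.artanh]
    ring
  have hdiff : hC z - gC z = Complex.sinh (2 * Complex.artanh z) / 2 := by
    rw [Complex.sinh_two_mul_artanh hz]
    simp only [hC, gC]
    ring
  rw [fC, Complex.add_conj_eq_mk, hsum, hdiff]
  apply Complex.ext
  · rfl
  · simp [Complex.sinh_im]

lemma mapsTo_catenoidStripMap : MapsTo catenoidStripMap quarterPiStrip catenoidImage := by
  intro ζ hζ
  have hs := Real.mapsTo_sin_Ioo (mem_quarterPiStrip_iff.1 hζ)
  have hc := Real.cosh_pos (2 * ζ.re)
  rw [mem_catenoidImage, catenoidStripMap_re, catenoidStripMap_im, abs_lt]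
  constructor <;> nlinarith [hs.1, hs.2]

lemma injOn_catenoidStripMap : InjOn catenoidStripMap quarterPiStrip := by
  intro ζ₁ hζ₁ ζ₂ hζ₂ h
  obtain ⟨hre, him⟩ := Complex.ext_iff.1 h
  simp only [catenoidStripMap_re] at hre
  simp only [catenoidStripMap_im, hre] at him
  have hsin : Real.sin (2 * ζ₁.im) = Real.sin (2 * ζ₂.im) :=
    mul_left_cancel₀ (Real.cosh_pos (2 * ζ₂.re)).ne' (by linarith)
  have him' := Real.sinPartialHomeomorph.injOn (mem_quarterPiStrip_iff.1 hζ₁)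
    (mem_quarterPiStrip_iff.1 hζ₂) hsin
  exact Complex.ext hre (by linarith)

lemma surjOn_catenoidStripMap : SurjOn catenoidStripMap quarterPiStrip catenoidImage := by
  intro w hw
  have hc := Real.cosh_pos (2 * w.re)
  have hw' := abs_lt.1 (mem_catenoidImage.1 hw)
  set s := 2 * w.im / Real.cosh (2 * w.re) with hs_def
  have hs : s ∈ Ioo (-1) 1 := by
    constructor
    · rw [lt_div_iff₀ hc]
      linarith
    · rw [div_lt_iff₀ hc]
      linarith
  refine ⟨⟨w.re, Real.arcsin s / 2⟩, ?_, ?_⟩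
  · rw [mem_quarterPiStrip_iff]
    change 2 * (Real.arcsin s / 2) ∈ _
    rw [mul_div_cancel₀ _ two_ne_zero]
    exact ⟨Real.neg_pi_div_two_lt_arcsin.2 hs.1, Real.arcsin_lt_pi_div_two.2 hs.2⟩
  · apply Complex.ext
    · rfl
    · change Real.cosh (2 * w.re) * Real.sin (2 * (Real.arcsin s / 2)) / 2 = w.im
      rw [mul_div_cancel₀ _ two_ne_zero, Real.sin_arcsin hs.1.le hs.2.le, hs_def]
      field_simp

lemma bijOn_catenoidStripMap : BijOn catenoidStripMap quarterPiStrip catenoidImage :=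
  ⟨mapsTo_catenoidStripMap, injOn_catenoidStripMap, surjOn_catenoidStripMap⟩

lemma convexImDir_catenoidImage : ConvexImDir catenoidImage := by
  intro a
  have hIoo : {t : ℝ | a + t * I ∈ catenoidImage} =
      Ioo (-(Real.cosh (2 * a.re) / 2) - a.im) (Real.cosh (2 * a.re) / 2 - a.im) := by
    ext t
    simp only [mem_ofPred_eq, mem_catenoidImage, add_re, add_im, mul_re, mul_im, ofReal_re,
      ofReal_im, I_re, I_im, mul_zero, sub_zero, mul_one, add_zero, abs_lt, mem_Ioo]
    constructor <;> rintro ⟨h₁, h₂⟩ <;> constructor <;> linarith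
  rw [hIoo]
  exact ordConnected_Ioo

lemma bijOn_fC : BijOn fC 𝔻 catenoidImage :=
  (bijOn_catenoidStripMap.comp Complex.bijOn_artanh).congr
    fun _ hz ↦ (fC_eq_catenoidStripMap_artanh hz).symm

/-- The harmonic catenoid mapping is injective on `𝔻` and its image is convex in the direction
of the imaginary axis. -/
theorem stmt13 : Set.InjOn fC 𝔻 ∧ ConvexImDir (fC '' 𝔻) :=
  ⟨bijOn_fC.injOn, bijOn_fC.image_eq ▸ convexImDir_catenoidImage⟩
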